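/- Let G be a simple graph, C a cycle in G, and K a clique of G. Let Z be the set of vertices that are incident in C with at least one edge of E(C) ∩ E(K), write Z = {v_1, …, v_{k'}} with an arbitrary ordering. Then there is a cycle C' in G with V(C') = V(C) such that E(C') ∖ E(Z) = E(C) ∖ E(Z), and for every j ∈ {1, …, k'}, at most 2 edges of E(C') ∩ E(Z) have one endpoint in {v_1, …, v_j} and the other in {v_{j+1}, …, v_{k'}}. -/

import Mathlib

open SimpleGraph

section Defs

variable {V : Type*} {ι : Type*}

/-- `W, U` is a bipartition of the simple graph `B`. -/
def IsBipartition (B : SimpleGraph V) (W U : Set V) : Prop :=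
  (∀ v, v ∈ W ∨ v ∈ U) ∧ (∀ v, ¬(v ∈ W ∧ v ∈ U)) ∧
    ∀ ⦃a b⦄, B.Adj a b → (a ∈ W ∧ b ∈ U) ∨ (a ∈ U ∧ b ∈ W)

/-- The half-square of `B` on side `W`: two distinct vertices of `W` are adjacent
iff they have a common neighbor in `B`. -/
def halfSquare (B : SimpleGraph V) (W : Set V) : SimpleGraph V where
  Adj a b := a ≠ b ∧ a ∈ W ∧ b ∈ W ∧ ∃ s, B.Adj a s ∧ B.Adj b s
  symm := by
    constructor; rintro a b ⟨hne, ha, hb, s, h1, h2⟩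
    exact ⟨hne.symm, hb, ha, s, h2, h1⟩
  loopless := by constructor; rintro a ⟨hne, _⟩; exact hne rfl

/-- Tree decomposition of the graph `H` with vertex set `S`, over the tree `T`. -/
structure IsTreeDecompOn (H : SimpleGraph V) (S : Set V) (T : SimpleGraph ι)
    (β : ι → Set V) : Prop where
  covers : ∀ v ∈ S, ∃ t, v ∈ β t
  edge_mem : ∀ ⦃u v⦄, H.Adj u v → ∃ t, u ∈ β t ∧ v ∈ β t
  conn : ∀ v ∈ S, (T.induce {t | v ∈ β t}).Connected

/-- `t'` is a descendant of `t` (inclusively) in the tree `T` rooted at `r`: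
`t` lies on every path from `t'` to the root. -/
def Desc (T : SimpleGraph ι) (r : ι) (t t' : ι) : Prop :=
  ∀ p : T.Walk t' r, p.IsPath → t ∈ p.support

/-- `γ(t)`: union of the bags of `t` and of all its descendants. -/
def gammaSet (T : SimpleGraph ι) (r : ι) (β : ι → Set V) (t : ι) : Set V :=
  ⋃ t' ∈ {t' | Desc T r t t'}, β t'

/-- The bag of the derived decomposition. -/
def derivedBag (B : SimpleGraph V) (W U : Set V) (T : SimpleGraph ι) (r : ι)
    (β : ι → Set V) (t : ι) : Set V :=
  (β t ∩ W) ∪ ⋃ s ∈ β t ∩ U, B.neighborSet s ∩ gammaSet T r β t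

def originalSet (B : SimpleGraph V) (W U : Set V) (T : SimpleGraph ι) (r : ι)
    (β : ι → Set V) (t : ι) : Set V :=
  β t ∩ derivedBag B W U T r β t

def fakeSet (B : SimpleGraph V) (W U : Set V) (T : SimpleGraph ι) (r : ι)
    (β : ι → Set V) (t : ι) : Set V :=
  derivedBag B W U T r β t \ β t

def cliquesAt (B : SimpleGraph V) (U : Set V) (β : ι → Set V) (t : ι) : Set (Set V) :=
  {K | ∃ s ∈ β t ∩ U, K = B.neighborSet s}

def IsChild (T : SimpleGraph ι) (r : ι) (t t' : ι) : Prop :=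
  T.Adj t t' ∧ Desc T r t t'

def IsLeafNode (T : SimpleGraph ι) (r : ι) (β : ι → Set V) (t : ι) : Prop :=
  (∀ t', ¬ IsChild T r t t') ∧ β t = ∅

def IsForgetNode (T : SimpleGraph ι) (r : ι) (β : ι → Set V) (w : V) (t : ι) : Prop :=
  ∃ t', IsChild T r t t' ∧ (∀ t'', IsChild T r t t'' → t'' = t') ∧
    w ∈ β t' ∧ β t = β t' \ {w}

def IsIntroduceNode (T : SimpleGraph ι) (r : ι) (β : ι → Set V) (w : V) (t : ι) : Prop :=
  ∃ t', IsChild T r t t' ∧ (∀ t'', IsChild T r t t'' → t'' = t') ∧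
    w ∈ β t ∧ β t \ {w} = β t'

def IsJoinNode (T : SimpleGraph ι) (r : ι) (β : ι → Set V) (t : ι) : Prop :=
  ∃ t₁ t₂, t₁ ≠ t₂ ∧ IsChild T r t t₁ ∧ IsChild T r t t₂ ∧
    (∀ t'', IsChild T r t t'' → t'' = t₁ ∨ t'' = t₂) ∧ β t = β t₁ ∧ β t = β t₂

/-- A nice (rooted) tree decomposition. -/
def IsNice (T : SimpleGraph ι) (r : ι) (β : ι → Set V) : Prop :=
  β r = ∅ ∧ ∀ t, IsLeafNode T r β t ∨ (∃ w, IsForgetNode T r β w t) ∨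
    (∃ w, IsIntroduceNode T r β w t) ∨ IsJoinNode T r β t

/-- `E(X)`: edges of `G` with both endpoints in `X`. -/
def edgesIn (G : SimpleGraph V) (X : Set V) : Set (Sym2 V) :=
  {e | e ∈ G.edgeSet ∧ ∀ x ∈ e, x ∈ X}

end Defs

/-!
The potential of a cycle is the number of pairs (cut `j`, edge crossing `j`), i.e. the sum of
`|i - i'|` over its edges `v i v i'`. If some cut is crossed by three edges of the cycle, two of
them, `ab` and `cd`, are traversed in the same direction (`a, c ≤ j < b, d`). As `Z` is a clique,
reversing the segment of the cycle from `b` to `c` replaces `ab`, `cd` by `ac`, `bd`: this keeps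
the vertex set and every edge outside `E(Z)`, and strictly lowers the potential, since
`|a - c| + |b - d| < |a - b| + |c - d|`. A cycle of minimal potential therefore crosses every cut
at most twice.
-/

namespace SimpleGraph.Walk

variable {V : Type*} {G : SimpleGraph V}

lemma exists_eq_append_cons_of_mem_darts {u w : V} {p : G.Walk u w} {d : G.Dart}
    (hd : d ∈ p.darts) :
    ∃ (q : G.Walk u d.fst) (r : G.Walk d.snd w), p = q.append (cons d.adj r) := by
  induction p with
  | nil => simp at hd
  | cons h p ih =>
    rcases List.mem_cons.mp hd with rfl | hd
    · exact ⟨nil, p, rfl⟩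
    · obtain ⟨q, r, rfl⟩ := ih hd
      exact ⟨cons h q, r, rfl⟩

lemma isCycle_append_comm {u w : V} (p : G.Walk u w) (q : G.Walk w u) :
    (p.append q).IsCycle ↔ (q.append p).IsCycle := by
  simp only [isCycle_def, isTrail_def, edges_append, tail_support_append,
    List.perm_append_comm.nodup_iff, ne_eq, eq_nil_iff_nil, ← length_eq_zero_iff, length_append,
    add_comm]

lemma IsCycle.reverse_segment {a b c d : V} {hab : G.Adj a b} {hcd : G.Adj c d}
    {P : G.Walk b c} {Q : G.Walk d a} (hC : (cons hab (P.append (cons hcd Q))).IsCycle)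
    (hac : G.Adj a c) (hbd : G.Adj b d) : (cons hac (P.reverse.append (cons hbd Q))).IsCycle := by
  rw [cons_isCycle_iff] at hC ⊢
  obtain ⟨hpath, hab_notMem⟩ := hC
  rw [isPath_def, support_append, support_cons, List.tail_cons] at hpath
  have hdisj : ∀ x ∈ P.support, x ∉ Q.support := fun x hx hx' =>
    List.disjoint_of_nodup_append hpath hx hx'
  refine ⟨?_, ?_⟩
  · rw [isPath_def, support_append, support_cons, List.tail_cons, support_reverse]
    exact (List.reverse_perm _).append_right _ |>.nodup_iff.mpr hpath
  · rw [edges_append, edges_cons, edges_reverse]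
    simp only [List.mem_append, List.mem_reverse, List.mem_cons, not_or]
    refine ⟨fun h => hdisj a (P.fst_mem_support_of_mem_edges h) Q.end_mem_support, ?_,
      fun h => hdisj c P.end_mem_support (Q.snd_mem_support_of_mem_edges h)⟩
    intro h
    rcases Sym2.eq_iff.mp h with ⟨rfl, -⟩ | ⟨rfl, rfl⟩
    · exact hab.ne rfl
    · exact hab_notMem (by simp [Sym2.eq_swap])

lemma IsCycle.fst_injOn_darts {w : V} {C : G.Walk w w} (hC : C.IsCycle) :
    Set.InjOn (fun d : G.Dart => d.fst) {d | d ∈ C.darts} := by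
  have hnodup := hC.nodup_dropLast_support
  rw [← map_fst_darts] at hnodup
  exact List.inj_on_of_nodup_map hnodup

lemma IsCycle.snd_injOn_darts {w : V} {C : G.Walk w w} (hC : C.IsCycle) :
    Set.InjOn (fun d : G.Dart => d.snd) {d | d ∈ C.darts} := by
  have hnodup := hC.support_nodup
  rw [← map_snd_darts] at hnodup
  exact List.inj_on_of_nodup_map hnodup

lemma IsCycle.exists_swap {w : V} {C : G.Walk w w} (hC : C.IsCycle) {d₁ d₂ : G.Dart}
    (h₁ : d₁ ∈ C.darts) (h₂ : d₂ ∈ C.darts) (hne : d₁ ≠ d₂)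
    (hfst : G.Adj d₁.fst d₂.fst) (hsnd : G.Adj d₁.snd d₂.snd) :
    ∃ (u : V) (C' : G.Walk u u) (L : List (Sym2 V)), C'.IsCycle ∧
      (∀ x, x ∈ C'.support ↔ x ∈ C.support) ∧
      C.edges.Perm (d₁.edge :: d₂.edge :: L) ∧
      C'.edges.Perm (s(d₁.fst, d₂.fst) :: s(d₁.snd, d₂.snd) :: L) := by
  obtain ⟨q, r, rfl⟩ := exists_eq_append_cons_of_mem_darts h₁
  have hR : d₂ ∈ (r.append q).darts := by
    simp only [darts_append, darts_cons, List.mem_append, List.mem_cons] at h₂ ⊢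
    rcases h₂ with h | rfl | h
    exacts [.inr h, absurd rfl hne, .inl h]
  obtain ⟨P, Q, hPQ⟩ := exists_eq_append_cons_of_mem_darts hR
  have hC₁ : (cons d₁.adj (P.append (cons d₂.adj Q))).IsCycle := by
    rw [← hPQ, ← cons_append, ← isCycle_append_comm]
    exact hC
  have hsupp : (cons hfst (P.reverse.append (cons hsnd Q))).support.Perm
      ((cons d₁.adj r).append q).support := by
    rw [cons_append, hPQ]
    simp only [support_cons, support_append, support_reverse, List.tail_cons]
    exact ((List.reverse_perm _).append_right _).cons _
  refine ⟨_, _, P.edges ++ Q.edges, hC₁.reverse_segment hfst hsnd, fun x => ?_, ?_, ?_⟩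
  · rw [hsupp.mem_iff, mem_support_append_iff, mem_support_append_iff, or_comm]
  · rw [edges_append, edges_cons]
    have hr : r.edges ++ q.edges = P.edges ++ d₂.edge :: Q.edges := by
      rw [← edges_append, hPQ, edges_append, edges_cons]; rfl
    refine List.perm_middle.trans (List.Perm.cons _ ?_)
    exact List.perm_append_comm.trans (hr ▸ List.perm_middle)
  · simp only [edges_cons, edges_append, edges_reverse]
    exact (List.perm_middle.trans (((List.reverse_perm _).append_right _).cons _)).cons _

lemma one_lt_ncard_darts_of_two_lt_ncard_edges {u w : V} (p : G.Walk u w) {L R : Set V}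
    (h : 2 < {e | e ∈ p.edges ∧ ∃ x y, e = s(x, y) ∧ x ∈ L ∧ y ∈ R}.ncard) :
    1 < {d | d ∈ p.darts ∧ d.fst ∈ L ∧ d.snd ∈ R}.ncard ∨
      1 < {d | d ∈ p.darts ∧ d.fst ∈ R ∧ d.snd ∈ L}.ncard := by
  set up := {d | d ∈ p.darts ∧ d.fst ∈ L ∧ d.snd ∈ R}
  set down := {d | d ∈ p.darts ∧ d.fst ∈ R ∧ d.snd ∈ L}
  have hfin : (up ∪ down).Finite :=
    p.darts.finite_toSet.subset (by rintro d (⟨hd, -⟩ | ⟨hd, -⟩) <;> exact hd)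
  have hsub :
      {e | e ∈ p.edges ∧ ∃ x y, e = s(x, y) ∧ x ∈ L ∧ y ∈ R} ⊆ Dart.edge '' (up ∪ down) := by
    rintro e ⟨he, x, y, rfl, hx, hy⟩
    obtain ⟨d, hd, hde⟩ := List.mem_map.mp he
    refine ⟨d, ?_, hde⟩
    rcases dart_edge_eq_mk'_iff'.mp hde with ⟨h₁, h₂⟩ | ⟨h₁, h₂⟩
    · exact .inl ⟨hd, h₁ ▸ hx, h₂ ▸ hy⟩
    · exact .inr ⟨hd, h₁ ▸ hy, h₂ ▸ hx⟩
  have := (Set.ncard_le_ncard hsub (hfin.image _)).trans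
    ((Set.ncard_image_le hfin).trans (Set.ncard_union_le up down))
  omega

end SimpleGraph.Walk

lemma mk_mem_edgesIn {V : Type*} {G : SimpleGraph V} {X : Set V} {x y : V} (h : G.Adj x y)
    (hx : x ∈ X) (hy : y ∈ X) : s(x, y) ∈ edgesIn G X :=
  ⟨h, fun _ hz => (Sym2.mem_iff.mp hz).elim (· ▸ hx) (· ▸ hy)⟩

section Cuts

variable {V : Type*} {G : SimpleGraph V} {n : ℕ} (v : Fin n → V)

def CrossesCut (j : Fin n) (e : Sym2 V) : Prop :=
  ∃ p q, e = s(p, q) ∧ p ∈ v '' {i | i ≤ j} ∧ q ∈ v '' {i | j < i}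

noncomputable def cutCount (e : Sym2 V) : ℕ := {j | CrossesCut v j e}.ncard

noncomputable def cutWeight {u w : V} (p : G.Walk u w) : ℕ := (p.edges.map (cutCount v)).sum

variable {v}

lemma crossesCut_mk_iff (hv : Function.Injective v) {i i' j : Fin n} :
    CrossesCut v j s(v i, v i') ↔ min i i' ≤ j ∧ j < max i i' := by
  constructor
  · rintro ⟨p, q, he, ⟨a, ha, rfl⟩, ⟨b, hb, rfl⟩⟩
    simp only [Set.mem_ofPred_eq] at ha hb
    rw [min_le_iff, lt_max_iff]
    rcases Sym2.eq_iff.mp he with ⟨h₁, h₂⟩ | ⟨h₁, h₂⟩ <;> rw [hv h₁, hv h₂] <;> omega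
  · rintro ⟨h₁, h₂⟩
    rcases le_total i i' with h | h
    · exact ⟨v i, v i', rfl, ⟨i, by simpa [h] using h₁, rfl⟩, ⟨i', by simpa [h] using h₂, rfl⟩⟩
    · exact ⟨v i', v i, Sym2.eq_swap, ⟨i', by simpa [h] using h₁, rfl⟩,
        ⟨i, by simpa [h] using h₂, rfl⟩⟩

lemma cutCount_mk (hv : Function.Injective v) (i i' : Fin n) :
    cutCount v s(v i, v i') = (max i i' : ℕ) - min i i' := by
  have : {j | CrossesCut v j s(v i, v i')} = ↑(Finset.Ico (min i i') (max i i')) := by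
    ext j
    simp [crossesCut_mk_iff hv]
  rw [cutCount, this, Set.ncard_coe_finset, Fin.card_Ico]
  simp

lemma cutCount_exchange (hv : Function.Injective v) {a b c d j : Fin n}
    (h : a ≤ j ∧ c ≤ j ∧ j < b ∧ j < d ∨ b ≤ j ∧ d ≤ j ∧ j < a ∧ j < c) :
    cutCount v s(v a, v c) + cutCount v s(v b, v d) <
      cutCount v s(v a, v b) + cutCount v s(v c, v d) := by
  simp only [cutCount_mk hv, Fin.coe_min]
  simp only [Fin.le_def, Fin.lt_def] at h
  omega

lemma SimpleGraph.Walk.IsCycle.exists_cutWeight_lt_of_darts (hv : Function.Injective v)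
    (hadj : ∀ i i', i ≠ i' → G.Adj (v i) (v i')) {w : V} {C : G.Walk w w} (hC : C.IsCycle)
    {d₁ d₂ : G.Dart} (h₁ : d₁ ∈ C.darts) (h₂ : d₂ ∈ C.darts) (hne : d₁ ≠ d₂) {a b c d j : Fin n}
    (ha : d₁.fst = v a) (hb : d₁.snd = v b) (hc : d₂.fst = v c) (hd : d₂.snd = v d)
    (h : a ≤ j ∧ c ≤ j ∧ j < b ∧ j < d ∨ b ≤ j ∧ d ≤ j ∧ j < a ∧ j < c) :
    ∃ (u : V) (C' : G.Walk u u), C'.IsCycle ∧ {x | x ∈ C'.support} = {x | x ∈ C.support} ∧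
      {e | e ∈ C'.edges} \ edgesIn G (Set.range v) =
        {e | e ∈ C.edges} \ edgesIn G (Set.range v) ∧
      cutWeight v C' < cutWeight v C := by
  have hac : a ≠ c := fun h => hne (hC.fst_injOn_darts h₁ h₂ (by simp only [ha, hc, h]))
  have hbd : b ≠ d := fun h => hne (hC.snd_injOn_darts h₁ h₂ (by simp only [hb, hd, h]))
  obtain ⟨u, C', L, hC', hsupp, hE, hE'⟩ := hC.exists_swap h₁ h₂ hne
    (by rw [ha, hc]; exact hadj a c hac) (by rw [hb, hd]; exact hadj b d hbd)
  have he₁ : d₁.edge = s(v a, v b) := by rw [← ha, ← hb]; rfl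
  have he₂ : d₂.edge = s(v c, v d) := by rw [← hc, ← hd]; rfl
  rw [he₁, he₂] at hE
  rw [ha, hb, hc, hd] at hE'
  have hZ : ∀ {i i'}, i ≠ i' → s(v i, v i') ∈ edgesIn G (Set.range v) :=
    fun h => mk_mem_edgesIn (hadj _ _ h) ⟨_, rfl⟩ ⟨_, rfl⟩
  have hab : a ≠ b := by rintro rfl; omega
  have hcd : c ≠ d := by rintro rfl; omega
  refine ⟨u, C', hC', Set.ext hsupp, ?_, ?_⟩
  · ext e
    simp only [Set.mem_sdiff, Set.mem_ofPred_eq, hE.mem_iff, hE'.mem_iff, List.mem_cons]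
    constructor <;> rintro ⟨rfl | rfl | he, hn⟩
    exacts [absurd (hZ hac) hn, absurd (hZ hbd) hn, ⟨.inr (.inr he), hn⟩,
      absurd (hZ hab) hn, absurd (hZ hcd) hn, ⟨.inr (.inr he), hn⟩]
  · simp only [cutWeight, (hE.map _).sum_eq, (hE'.map _).sum_eq, List.map_cons, List.sum_cons]
    have := cutCount_exchange hv h
    omega

lemma SimpleGraph.Walk.IsCycle.exists_cutWeight_lt (hv : Function.Injective v)
    (hadj : ∀ i i', i ≠ i' → G.Adj (v i) (v i')) {w : V} {C : G.Walk w w} (hC : C.IsCycle)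
    {j : Fin n} (hj : 2 < {e | e ∈ C.edges ∧ CrossesCut v j e}.ncard) :
    ∃ (u : V) (C' : G.Walk u u), C'.IsCycle ∧ {x | x ∈ C'.support} = {x | x ∈ C.support} ∧
      {e | e ∈ C'.edges} \ edgesIn G (Set.range v) =
        {e | e ∈ C.edges} \ edgesIn G (Set.range v) ∧
      cutWeight v C' < cutWeight v C := by
  have hfin : ∀ P : G.Dart → Prop, {d | d ∈ C.darts ∧ P d}.Finite :=
    fun _ => C.darts.finite_toSet.subset fun _ hd => hd.1
  rcases C.one_lt_ncard_darts_of_two_lt_ncard_edges hj with hdir | hdir <;>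
    obtain ⟨d₁, d₂, ⟨h₁, ⟨a, ha, ea⟩, ⟨b, hb, eb⟩⟩, ⟨h₂, ⟨c, hc, ec⟩, ⟨d, hd, ed⟩⟩, hne⟩ :=
      (Set.one_lt_ncard_iff (hfin _)).mp hdir
  · exact hC.exists_cutWeight_lt_of_darts hv hadj h₁ h₂ hne ea.symm eb.symm ec.symm ed.symm
      (.inl ⟨ha, hc, hb, hd⟩)
  · exact hC.exists_cutWeight_lt_of_darts hv hadj h₁ h₂ hne ea.symm eb.symm ec.symm ed.symm
      (.inr ⟨hb, hd, ha, hc⟩)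

lemma SimpleGraph.Walk.IsCycle.exists_ncard_crossesCut_le_two (hv : Function.Injective v)
    (hadj : ∀ i i', i ≠ i' → G.Adj (v i) (v i')) {w : V} {C : G.Walk w w} (hC : C.IsCycle) :
    ∃ (u : V) (C' : G.Walk u u), C'.IsCycle ∧ {x | x ∈ C'.support} = {x | x ∈ C.support} ∧
      {e | e ∈ C'.edges} \ edgesIn G (Set.range v) =
        {e | e ∈ C.edges} \ edgesIn G (Set.range v) ∧
      ∀ j, {e | e ∈ C'.edges ∧ CrossesCut v j e}.ncard ≤ 2 := by
  induction hn : cutWeight v C using Nat.strong_induction_on generalizing w C with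
  | _ n ih =>
  by_cases h : ∀ j, {e | e ∈ C.edges ∧ CrossesCut v j e}.ncard ≤ 2
  · exact ⟨w, C, hC, rfl, rfl, h⟩
  obtain ⟨j, hj⟩ := not_forall.mp h
  obtain ⟨u, C', hC', hsupp, hedges, hlt⟩ := hC.exists_cutWeight_lt hv hadj (not_le.mp hj)
  obtain ⟨u', C'', hC'', hsupp', hedges', hcut⟩ := ih _ (hn ▸ hlt) hC' rfl
  exact ⟨u', C'', hC'', hsupp'.trans hsupp, hedges'.trans hedges, hcut⟩

end Cuts

theorem stmt_7_general {V : Type*} (G : SimpleGraph V)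
    (w : V) (C : G.Walk w w) (hC : C.IsCycle)
    (K : Set V) (hK : G.IsClique K)
    (k' : ℕ) (v : Fin k' → V) (hinj : Function.Injective v)
    (hZ : Set.range v = {x | ∃ e ∈ C.edges, e ∈ edgesIn G K ∧ x ∈ e}) :
    ∃ (w' : V) (C' : G.Walk w' w'), C'.IsCycle ∧
      {x | x ∈ C'.support} = {x | x ∈ C.support} ∧
      {e | e ∈ C'.edges} \ edgesIn G (Set.range v)
        = {e | e ∈ C.edges} \ edgesIn G (Set.range v) ∧
      ∀ j : Fin k',
        {e | e ∈ C'.edges ∧ e ∈ edgesIn G (Set.range v) ∧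
          ∃ p q, e = s(p, q) ∧ p ∈ v '' {i | i ≤ j} ∧ q ∈ v '' {i | j < i}}.ncard ≤ 2 := by
  have hvK : ∀ i, v i ∈ K := by
    intro i
    obtain ⟨e, -, heK, hie⟩ : v i ∈ {x | ∃ e ∈ C.edges, e ∈ edgesIn G K ∧ x ∈ e} :=
      hZ ▸ Set.mem_range_self i
    exact heK.2 _ hie
  obtain ⟨u, C', hC', hsupp, hedges, hcut⟩ :=
    hC.exists_ncard_crossesCut_le_two hinj fun i i' h => hK (hvK i) (hvK i') (hinj.ne h)
  refine ⟨u, C', hC', hsupp, hedges, fun j => (Set.ncard_le_ncard ?_ ?_).trans (hcut j)⟩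
  · exact fun e he => ⟨he.1, he.2.2⟩
  · exact C'.edges.finite_toSet.subset fun _ he => he.1

/-- given a cycle `C` in `G`, a clique `K`, and an arbitrary
ordering `v_1, …, v_{k'}` of the set `Z` of vertices incident in `C` with an
edge of `E(C) ∩ E(K)`, there is a cycle `C'` on the same vertex set, agreeing
with `C` outside `E(Z)`, whose edges inside `Z` cross every prefix/suffix cut of
the ordering at most twice. -/
theorem stmt_7 {V : Type*} [Fintype V] [DecidableEq V] (G : SimpleGraph V)
    (w : V) (C : G.Walk w w) (hC : C.IsCycle)
    (K : Set V) (hK : G.IsClique K)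
    (k' : ℕ) (v : Fin k' → V) (hinj : Function.Injective v)
    (hZ : Set.range v = {x | ∃ e ∈ C.edges, e ∈ edgesIn G K ∧ x ∈ e}) :
    ∃ (w' : V) (C' : G.Walk w' w'), C'.IsCycle ∧
      {x | x ∈ C'.support} = {x | x ∈ C.support} ∧
      {e | e ∈ C'.edges} \ edgesIn G (Set.range v)
        = {e | e ∈ C.edges} \ edgesIn G (Set.range v) ∧
      ∀ j : Fin k',
        {e | e ∈ C'.edges ∧ e ∈ edgesIn G (Set.range v) ∧
          ∃ p q, e = s(p, q) ∧ p ∈ v '' {i | i ≤ j} ∧ q ∈ v '' {i | j < i}}.ncard ≤ 2 :=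
  stmt_7_general G w C hC K hK k' v hinj hZ
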